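/- Let γ ∈ (0,1), N ≥ 1, K > 0, v > 1 with ((1+γ²)/2)·v^{1/2} < 1, and I_n = I₀·v^n for I₀ > 0. Suppose a sequence of ℝ^N-valued random vectors (p̂_n) and a fixed vector p* satisfy: (i) ‖p* - z(p̂_n)‖ ≤ γ‖p* - p̂_n‖ almost surely for a map z, and (ii) E[‖z(p̂_n) - p̂_{n+1}‖²] ≤ N²·K·I_n^{-1/2} for all n. Then there is a constant K' with E[‖p̂_{n+1} - p*‖²] ≤ N²·K'·I_n^{-1/2} for all n, and in particular p̂_n → p* in probability. -/

import Mathlib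

/-!
Write `e n` for the mean-square error `E‖p̂ₙ - p*‖²`. The triangle inequality through `z(p̂ₙ)`,
the contraction (i) and Young's inequality give the linear recursion
`e (n+1) ≤ (1+γ²)/2 · e n + (1+γ²)/(1-γ²) · N²K I₀^{-1/2} v^{-n/2}`.
Since the forcing term decays geometrically at the rate `v^{-1/2}`, which beats the contraction
factor `(1+γ²)/2`, induction gives `e n = O(v^{-n/2})`; Markov's inequality applied to
`‖p̂ₙ - p*‖²` then yields convergence in probability.
-/

open MeasureTheory Filter Topology

theorem mul_add_sq_le_of_sq_lt_one {γ : ℝ} (hγ : γ ^ 2 < 1) (a d : ℝ) :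
    (γ * a + d) ^ 2 ≤ (1 + γ ^ 2) / 2 * a ^ 2 + (1 + γ ^ 2) / (1 - γ ^ 2) * d ^ 2 := by
  have hpos : 0 < 1 - γ ^ 2 := sub_pos.mpr hγ
  rw [div_mul_eq_mul_div, div_mul_eq_mul_div, div_add_div _ _ two_ne_zero hpos.ne',
    le_div_iff₀ (by positivity)]
  -- Young's inequality `2γad ≤ (1 - γ²)/2 · a² + 2γ²/(1 - γ²) · d²`, cleared of denominators
  nlinarith [sq_nonneg ((1 - γ ^ 2) * a - 2 * γ * d)]

theorem norm_sub_sq_le_of_norm_sub_le_mul {E : Type*} [SeminormedAddCommGroup E]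
    {γ : ℝ} (hγ : γ ^ 2 < 1) {p x w y : E} (hw : ‖p - w‖ ≤ γ * ‖p - x‖) :
    ‖y - p‖ ^ 2 ≤
      (1 + γ ^ 2) / 2 * ‖x - p‖ ^ 2 + (1 + γ ^ 2) / (1 - γ ^ 2) * ‖w - y‖ ^ 2 := by
  have htri : ‖y - p‖ ≤ γ * ‖x - p‖ + ‖w - y‖ := by
    rw [norm_sub_rev x]
    calc ‖y - p‖ ≤ ‖p - w‖ + ‖w - y‖ := by
          rw [norm_sub_rev y]; exact norm_sub_le_norm_sub_add_norm_sub p w y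
      _ ≤ γ * ‖p - x‖ + ‖w - y‖ := by gcongr
  exact (pow_le_pow_left₀ (norm_nonneg _) htri 2).trans (mul_add_sq_le_of_sq_lt_one hγ _ _)

section MeanSquare

variable {Ω E : Type*} [MeasurableSpace Ω] {μ : Measure Ω}
  [NormedAddCommGroup E] [MeasurableSpace E] [BorelSpace E]

theorem lintegral_norm_sub_sq_le_of_ae_norm_sub_le_mul {γ : ℝ} (hγ : γ ^ 2 < 1)
    {F : E → E} {X Y : Ω → E} {p : E} (hX : AEMeasurable X μ)
    (hF : ∀ᵐ ω ∂μ, ‖p - F (X ω)‖ ≤ γ * ‖p - X ω‖) :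
    ∫⁻ ω, ENNReal.ofReal (‖Y ω - p‖ ^ 2) ∂μ ≤
      ENNReal.ofReal ((1 + γ ^ 2) / 2) * ∫⁻ ω, ENNReal.ofReal (‖X ω - p‖ ^ 2) ∂μ +
      ENNReal.ofReal ((1 + γ ^ 2) / (1 - γ ^ 2)) *
        ∫⁻ ω, ENNReal.ofReal (‖F (X ω) - Y ω‖ ^ 2) ∂μ := by
  have hη : 0 ≤ (1 + γ ^ 2) / 2 := by positivity
  have hc : 0 ≤ (1 + γ ^ 2) / (1 - γ ^ 2) := div_nonneg (by positivity) (sub_pos.mpr hγ).le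
  have hXp : AEMeasurable (fun ω => ENNReal.ofReal (‖X ω - p‖ ^ 2)) μ :=
    ENNReal.measurable_ofReal.comp_aemeasurable ((hX.sub_const p).norm.pow_const 2)
  rw [← lintegral_const_mul' _ _ ENNReal.ofReal_ne_top,
    ← lintegral_const_mul' _ _ ENNReal.ofReal_ne_top, ← lintegral_add_left' (hXp.const_mul _)]
  refine lintegral_mono_ae (hF.mono fun ω hω => ?_)
  rw [← ENNReal.ofReal_mul hη, ← ENNReal.ofReal_mul hc,
    ← ENNReal.ofReal_add (by positivity) (by positivity)]
  exact ENNReal.ofReal_le_ofReal (norm_sub_sq_le_of_norm_sub_le_mul hγ hω)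

theorem tendsto_measure_norm_sub_ge_of_tendsto_lintegral {ι : Type*} {l : Filter ι}
    {f : ι → Ω → E} {p : E} (hf : ∀ i, AEMeasurable (f i) μ)
    (h : Tendsto (fun i => ∫⁻ ω, ENNReal.ofReal (‖f i ω - p‖ ^ 2) ∂μ) l (𝓝 0))
    {ε : ℝ} (hε : 0 < ε) :
    Tendsto (fun i => μ {ω | ε ≤ ‖f i ω - p‖}) l (𝓝 0) := by
  have hε2 : ENNReal.ofReal (ε ^ 2) ≠ 0 := (ENNReal.ofReal_pos.mpr (by positivity)).ne'
  have hmarkov : ∀ i, μ {ω | ε ≤ ‖f i ω - p‖} ≤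
      (∫⁻ ω, ENNReal.ofReal (‖f i ω - p‖ ^ 2) ∂μ) / ENNReal.ofReal (ε ^ 2) := fun i =>
    calc μ {ω | ε ≤ ‖f i ω - p‖}
        ≤ μ {ω | ENNReal.ofReal (ε ^ 2) ≤ ENNReal.ofReal (‖f i ω - p‖ ^ 2)} :=
          measure_mono fun ω hω => ENNReal.ofReal_le_ofReal (pow_le_pow_left₀ hε.le hω 2)
      _ ≤ _ := meas_ge_le_lintegral_div
          (ENNReal.measurable_ofReal.comp_aemeasurable (((hf i).sub_const p).norm.pow_const 2))
          hε2 ENNReal.ofReal_ne_top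
  have hbound := ENNReal.Tendsto.div_const h (Or.inr hε2)
  rw [ENNReal.zero_div] at hbound
  exact tendsto_of_tendsto_of_tendsto_of_le_of_le tendsto_const_nhds hbound
    (fun _ => zero_le) hmarkov

end MeanSquare

theorem ENNReal.le_mul_pow_of_le_mul_add_mul_pow {e : ℕ → ENNReal} {a b r C : ENNReal}
    (hrec : ∀ n, e (n + 1) ≤ a * e n + b * r ^ n) (h0 : e 0 ≤ C) (hC : a * C + b ≤ C * r)
    (n : ℕ) : e n ≤ C * r ^ n := by
  induction n with
  | zero => simpa using h0
  | succ n ih =>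
    calc e (n + 1) ≤ a * e n + b * r ^ n := hrec n
      _ ≤ a * (C * r ^ n) + b * r ^ n := by gcongr
      _ = (a * C + b) * r ^ n := by ring
      _ ≤ C * r * r ^ n := by gcongr
      _ = C * r ^ (n + 1) := by ring

theorem ENNReal.exists_le_ofReal_mul_pow_of_le_mul_add {e : ℕ → ENNReal} {η s B : ℝ}
    (hη : 0 ≤ η) (hηs : η < s) (hB : 0 < B) (h0 : e 0 ≠ ⊤)
    (hrec : ∀ n, e (n + 1) ≤ ENNReal.ofReal η * e n + ENNReal.ofReal (B * s ^ n)) :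
    ∃ C > 0, ∀ n, e n ≤ ENNReal.ofReal (C * s ^ n) := by
  have hs : 0 < s := hη.trans_lt hηs
  have hsη : 0 < s - η := sub_pos.mpr hηs
  set C := (e 0).toReal + B / (s - η) with hC
  have he0C : (e 0).toReal ≤ C := le_add_of_nonneg_right (div_pos hB hsη).le
  have hBC : B ≤ C * (s - η) := by
    rw [hC, add_mul, div_mul_cancel₀ _ hsη.ne']
    nlinarith [ENNReal.toReal_nonneg (a := e 0)]
  refine ⟨C, by positivity, fun n => ?_⟩
  rw [ENNReal.ofReal_mul (by positivity), ENNReal.ofReal_pow hs.le]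
  refine ENNReal.le_mul_pow_of_le_mul_add_mul_pow (a := ENNReal.ofReal η)
    (b := ENNReal.ofReal B) (fun n => ?_) ?_ ?_ n
  · rw [← ENNReal.ofReal_pow hs.le, ← ENNReal.ofReal_mul hB.le]
    exact hrec n
  · exact (ENNReal.ofReal_toReal h0).symm.le.trans (ENNReal.ofReal_le_ofReal he0C)
  · rw [← ENNReal.ofReal_mul hη, ← ENNReal.ofReal_add (by positivity) hB.le,
      ← ENNReal.ofReal_mul (by positivity)]
    exact ENNReal.ofReal_le_ofReal (by nlinarith)

theorem Real.mul_pow_rpow_neg_half {a v : ℝ} (ha : 0 ≤ a) (hv : 0 ≤ v) (n : ℕ) :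
    (a * v ^ n) ^ (-(1 / 2) : ℝ) = a ^ (-(1 / 2) : ℝ) * (√v)⁻¹ ^ n := by
  rw [Real.mul_rpow ha (by positivity)]
  congr 1
  rw [← Real.rpow_natCast v, ← Real.rpow_mul hv, mul_comm, Real.rpow_mul hv, Real.rpow_natCast,
    Real.rpow_neg hv, ← Real.sqrt_eq_rpow, inv_pow]

theorem stmt_18_general {Ω : Type*} [MeasurableSpace Ω] (μ : Measure Ω)
    (N : ℕ) (hN : 1 ≤ N) (γ K I₀ v : ℝ)
    (hγ : γ ∈ Set.Ioo (0:ℝ) 1) (hK : 0 < K) (hI : 0 < I₀) (hv : 1 < v)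
    (hηv : (1 + γ ^ 2) / 2 * Real.sqrt v < 1)
    (I : ℕ → ℝ) (hIdef : ∀ n, I n = I₀ * v ^ n)
    (z : EuclideanSpace ℝ (Fin N) → EuclideanSpace ℝ (Fin N))
    (phat : ℕ → Ω → EuclideanSpace ℝ (Fin N)) (hm : ∀ n, Measurable (phat n))
    (pstar : EuclideanSpace ℝ (Fin N))
    (h0 : ∫⁻ ω, ENNReal.ofReal (‖phat 0 ω - pstar‖ ^ 2) ∂μ ≠ ⊤)
    (hcontr : ∀ n, ∀ᵐ ω ∂μ, ‖pstar - z (phat n ω)‖ ≤ γ * ‖pstar - phat n ω‖)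
    (hest : ∀ n, ∫⁻ ω, ENNReal.ofReal (‖z (phat n ω) - phat (n + 1) ω‖ ^ 2) ∂μ ≤
      ENNReal.ofReal ((N : ℝ) ^ 2 * K * I n ^ (-(1 / 2) : ℝ))) :
    (∃ K' > 0, ∀ n, ∫⁻ ω, ENNReal.ofReal (‖phat (n + 1) ω - pstar‖ ^ 2) ∂μ ≤
      ENNReal.ofReal ((N : ℝ) ^ 2 * K' * I n ^ (-(1 / 2) : ℝ))) ∧
    ∀ ε : ℝ, 0 < ε →
      Filter.Tendsto (fun n => μ {ω | ε ≤ ‖phat n ω - pstar‖}) Filter.atTop (nhds 0) := by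
  obtain ⟨hγ0, hγ1⟩ := hγ
  have hγ2 : γ ^ 2 < 1 := by nlinarith
  have hc : 0 < (1 + γ ^ 2) / (1 - γ ^ 2) := div_pos (by positivity) (sub_pos.mpr hγ2)
  have hN0 : (0 : ℝ) < N := by exact_mod_cast hN
  have hsqrt : 1 < √v := (Real.lt_sqrt zero_le_one).mpr (by simpa using hv)
  set s := (√v)⁻¹ with hs
  set J := I₀ ^ (-(1 / 2) : ℝ)
  have hJ : 0 < J := by positivity
  have hs0 : 0 < s := by positivity
  have hs1 : s < 1 := inv_lt_one_of_one_lt₀ hsqrt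
  have hηs : (1 + γ ^ 2) / 2 < s := by
    rwa [hs, ← one_div, lt_div_iff₀ (zero_lt_one.trans hsqrt)]
  have hIs : ∀ n, I n ^ (-(1 / 2) : ℝ) = J * s ^ n := fun n => by
    rw [hIdef]; exact Real.mul_pow_rpow_neg_half hI.le (by linarith) n
  have hrec : ∀ n, ∫⁻ ω, ENNReal.ofReal (‖phat (n + 1) ω - pstar‖ ^ 2) ∂μ ≤
      ENNReal.ofReal ((1 + γ ^ 2) / 2) * ∫⁻ ω, ENNReal.ofReal (‖phat n ω - pstar‖ ^ 2) ∂μ +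
      ENNReal.ofReal ((1 + γ ^ 2) / (1 - γ ^ 2) * N ^ 2 * K * J * s ^ n) := fun n =>
    calc _ ≤ _ :=
          lintegral_norm_sub_sq_le_of_ae_norm_sub_le_mul hγ2 (hm n).aemeasurable (hcontr n)
      _ ≤ _ + ENNReal.ofReal ((1 + γ ^ 2) / (1 - γ ^ 2)) *
            ENNReal.ofReal (N ^ 2 * K * I n ^ (-(1 / 2) : ℝ)) := by gcongr; exact hest n
      _ = _ := by rw [← ENNReal.ofReal_mul hc.le, hIs]; ring_nf
  obtain ⟨C, hC, hCe⟩ := ENNReal.exists_le_ofReal_mul_pow_of_le_mul_add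
    (e := fun n => ∫⁻ ω, ENNReal.ofReal (‖phat n ω - pstar‖ ^ 2) ∂μ)
    (by positivity) hηs (by positivity) h0 hrec
  refine ⟨⟨C * s / (N ^ 2 * J), by positivity, fun n => (hCe (n + 1)).trans_eq ?_⟩,
    fun ε hε => tendsto_measure_norm_sub_ge_of_tendsto_lintegral (fun n => (hm n).aemeasurable)
      ?_ hε⟩
  · rw [hIs]
    congr 1
    field_simp
    ring
  · have hbound := ENNReal.tendsto_ofReal
      ((tendsto_pow_atTop_nhds_zero_of_lt_one hs0.le hs1).const_mul C)
    rw [mul_zero, ENNReal.ofReal_zero] at hbound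
    exact tendsto_of_tendsto_of_tendsto_of_le_of_le tendsto_const_nhds hbound
      (fun _ => zero_le) hCe

theorem stmt_18 {Ω : Type*} [MeasurableSpace Ω] (μ : Measure Ω) [IsProbabilityMeasure μ]
    (N : ℕ) (hN : 1 ≤ N) (γ K I₀ v : ℝ)
    (hγ : γ ∈ Set.Ioo (0:ℝ) 1) (hK : 0 < K) (hI : 0 < I₀) (hv : 1 < v)
    (hηv : (1 + γ ^ 2) / 2 * Real.sqrt v < 1)
    (I : ℕ → ℝ) (hIdef : ∀ n, I n = I₀ * v ^ n)
    (z : EuclideanSpace ℝ (Fin N) → EuclideanSpace ℝ (Fin N))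
    (phat : ℕ → Ω → EuclideanSpace ℝ (Fin N)) (hm : ∀ n, Measurable (phat n))
    (pstar : EuclideanSpace ℝ (Fin N))
    (h0 : ∫⁻ ω, ENNReal.ofReal (‖phat 0 ω - pstar‖ ^ 2) ∂μ ≠ ⊤)
    (hcontr : ∀ n, ∀ᵐ ω ∂μ, ‖pstar - z (phat n ω)‖ ≤ γ * ‖pstar - phat n ω‖)
    (hest : ∀ n, ∫⁻ ω, ENNReal.ofReal (‖z (phat n ω) - phat (n + 1) ω‖ ^ 2) ∂μ ≤
      ENNReal.ofReal ((N : ℝ) ^ 2 * K * I n ^ (-(1 / 2) : ℝ))) :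
    (∃ K' > 0, ∀ n, ∫⁻ ω, ENNReal.ofReal (‖phat (n + 1) ω - pstar‖ ^ 2) ∂μ ≤
      ENNReal.ofReal ((N : ℝ) ^ 2 * K' * I n ^ (-(1 / 2) : ℝ))) ∧
    ∀ ε : ℝ, 0 < ε →
      Filter.Tendsto (fun n => μ {ω | ε ≤ ‖phat n ω - pstar‖}) Filter.atTop (nhds 0) :=
  stmt_18_general μ N hN γ K I₀ v hγ hK hI hv hηv I hIdef z phat hm pstar h0 hcontr hest
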